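/- Let h : ℝ → ℝ be locally Lipschitz, let x : [a,b] → ℝⁿ be C¹ with derivative ẋ(t) = f(x(t)) for a continuous f, and suppose t ↦ h(x(t)) is nondecreasing on (b − η, b] for some η > 0. Then the Clarke generalized directional derivative satisfies h⁰(x(b); f(x(b))) ≥ 0. -/

import Mathlib

/-!
Take base points `y = x (b - t)` on the curve just before `b` and step `t` in the direction
`v = ẋ(b)`. Monotonicity gives `h y ≤ h (x b)`, and `y + t • v = x b + o(t)` since `v` is the
left derivative of `x` at `b`, so the Lipschitz bound makes the Clarke quotient at `(y, t)` at
least `-K · o(t) / t → 0`. Since the quotients are bounded above by `K ‖v‖` near `(x b, 0⁺)`,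
this path forces their limsup to be nonnegative.
-/

open Set Filter Topology

/-- The Clarke generalised directional derivative
`h⁰(z;v) = limsup_{y→z, t→0⁺} (h(y+tv) − h(y))/t`. -/
noncomputable def clarkeDirDeriv {n : ℕ} (h : EuclideanSpace ℝ (Fin n) → ℝ)
    (z v : EuclideanSpace ℝ (Fin n)) : ℝ :=
  limsup (fun p : EuclideanSpace ℝ (Fin n) × ℝ => (h (p.1 + p.2 • v) - h p.1) / p.2)
    ((nhds z) ×ˢ (nhdsWithin 0 (Ioi 0)))

theorem le_limsup_of_tendsto_of_eventually_le {α β : Type*} {F : Filter α} {l : Filter β}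
    [l.NeBot] {u : α → ℝ} {φ : β → α} {g : β → ℝ} {c : ℝ} (hφ : Tendsto φ l F)
    (hu : IsBoundedUnder (· ≤ ·) F u) (hg : Tendsto g l (𝓝 c))
    (hgu : ∀ᶠ t in l, g t ≤ u (φ t)) :
    c ≤ limsup u F := by
  refine le_of_forall_lt_imp_le_of_dense fun c' hc' => le_limsup_of_frequently_le ?_ hu
  refine hφ.frequently (Eventually.frequently ?_)
  filter_upwards [hg.eventually (lt_mem_nhds hc'), hgu] with t hlt hle
  exact hlt.le.trans hle

theorem tendsto_const_sub_nhdsGT_zero (b : ℝ) :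
    Tendsto (fun t => b - t) (𝓝[>] 0) (𝓝[<] b) := by
  have hmap := map_subLeft_nhdsGT (c := b) (a := (0 : ℝ))
  rw [sub_zero] at hmap
  exact hmap.le

section

variable {E : Type*} [NormedAddCommGroup E] [NormedSpace ℝ E]

theorem HasDerivWithinAt.tendsto_smul_sub_left {x : ℝ → E} {v : E} {b : ℝ}
    (hx : HasDerivWithinAt x v (Iio b) b) :
    Tendsto (fun t => t⁻¹ • (x b - x (b - t))) (𝓝[>] 0) (𝓝 v) := by
  have hslope := (hasDerivWithinAt_iff_tendsto_slope.1 hx).comp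
    (by simpa using tendsto_const_sub_nhdsGT_zero b)
  refine hslope.congr fun t => ?_
  simp only [Function.comp_apply, slope_def_module, sub_sub_cancel_left, inv_neg, neg_smul,
    ← smul_neg, neg_sub]

noncomputable def dirQuotient (h : E → ℝ) (v : E) (p : E × ℝ) : ℝ :=
  (h (p.1 + p.2 • v) - h p.1) / p.2

namespace LipschitzOnWith

variable {h : E → ℝ} {K : NNReal} {s : Set E}

theorem isBoundedUnder_dirQuotient (hK : LipschitzOnWith K h s) {z : E} (hs : s ∈ 𝓝 z)
    (v : E) : IsBoundedUnder (· ≤ ·) (𝓝 z ×ˢ 𝓝[>] 0) (dirQuotient h v) := by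
  have hshift : Tendsto (fun p : E × ℝ => p.1 + p.2 • v) (𝓝 z ×ˢ 𝓝[>] 0) (𝓝 z) := by
    have hcont : Continuous fun p : E × ℝ => p.1 + p.2 • v := by fun_prop
    have hF : 𝓝 z ×ˢ 𝓝[>] (0 : ℝ) ≤ 𝓝 (z, 0) := by
      rw [nhds_prod_eq]; exact prod_mono le_rfl nhdsWithin_le_nhds
    simpa using (hcont.tendsto (z, 0)).mono_left hF
  refine ⟨K * ‖v‖, eventually_map.2 ?_⟩
  filter_upwards [tendsto_fst hs, hshift hs, tendsto_snd self_mem_nhdsWithin]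
    with ⟨y, t⟩ (hy : y ∈ s) (hyv : y + t • v ∈ s) (ht : 0 < t)
  have hlip := (abs_le.1 ((Real.dist_eq _ _).symm.trans_le (hK.dist_le_mul _ hyv _ hy))).2
  rw [dist_eq_norm, add_sub_cancel_left, norm_smul, Real.norm_of_nonneg ht.le] at hlip
  rw [dirQuotient, div_le_iff₀ ht]
  linarith

theorem neg_mul_norm_le_dirQuotient (hK : LipschitzOnWith K h s) {y z v : E} {t : ℝ}
    (ht : 0 < t) (hz : z ∈ s) (hyv : y + t • v ∈ s) (hyz : h y ≤ h z) :
    -(K * ‖t⁻¹ • (z - y) - v‖) ≤ dirQuotient h v (y, t) := by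
  have hlip := (abs_le.1 ((Real.dist_eq _ _).symm.trans_le (hK.dist_le_mul _ hyv _ hz))).1
  have hdiff : y + t • v - z = -(t • (t⁻¹ • (z - y) - v)) := by
    rw [smul_sub, smul_inv_smul₀ ht.ne']; abel
  rw [dist_eq_norm, hdiff, norm_neg, norm_smul, Real.norm_of_nonneg ht.le] at hlip
  rw [dirQuotient, le_div_iff₀ ht]
  linarith

theorem limsup_dirQuotient_nonneg {x : ℝ → E} {v : E} {b : ℝ} (hK : LipschitzOnWith K h s)
    (hs : s ∈ 𝓝 (x b)) (hx : HasDerivWithinAt x v (Iio b) b)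
    (hmax : ∀ᶠ t in 𝓝[<] b, h (x t) ≤ h (x b)) :
    0 ≤ limsup (dirQuotient h v) (𝓝 (x b) ×ˢ 𝓝[>] 0) := by
  have hb := tendsto_const_sub_nhdsGT_zero b
  have hcurve : Tendsto (fun t => x (b - t)) (𝓝[>] 0) (𝓝 (x b)) :=
    hx.continuousWithinAt.tendsto.comp hb
  have hshift : Tendsto (fun t => x (b - t) + t • v) (𝓝[>] 0) (𝓝 (x b)) := by
    simpa using hcurve.add ((tendsto_id.mono_left nhdsWithin_le_nhds).smul_const v)
  have hslope : Tendsto (fun t => -(K * ‖t⁻¹ • (x b - x (b - t)) - v‖)) (𝓝[>] 0) (𝓝 0) := by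
    simpa using ((hx.tendsto_smul_sub_left.sub_const v).norm.const_mul (K : ℝ)).neg
  refine le_limsup_of_tendsto_of_eventually_le (hcurve.prodMk tendsto_id)
    (hK.isBoundedUnder_dirQuotient hs v) hslope ?_
  filter_upwards [self_mem_nhdsWithin, hb.eventually hmax, hshift hs] with t ht hle hmem
  exact hK.neg_mul_norm_le_dirQuotient ht (mem_of_mem_nhds hs) hmem hle

end LipschitzOnWith

end

theorem stmt5_general (n : ℕ) (h : EuclideanSpace ℝ (Fin n) → ℝ)
    (hLip : LocallyLipschitz h)
    (f : EuclideanSpace ℝ (Fin n) → EuclideanSpace ℝ (Fin n))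
    (a b : ℝ) (hab : a < b)
    (x : ℝ → EuclideanSpace ℝ (Fin n))
    (hx : ∀ t ∈ Icc a b, HasDerivAt x (f (x t)) t)
    (η : ℝ) (hη : 0 < η)
    (hmono : MonotoneOn (fun t => h (x t)) (Ioc (b - η) b)) :
    0 ≤ clarkeDirDeriv h (x b) (f (x b)) := by
  obtain ⟨K, s, hs, hK⟩ := hLip (x b)
  have hmax : ∀ᶠ t in 𝓝[<] b, h (x t) ≤ h (x b) := by
    filter_upwards [Ioo_mem_nhdsLT (sub_lt_self b hη)] with t ht
    exact hmono ⟨ht.1, ht.2.le⟩ ⟨sub_lt_self b hη, le_rfl⟩ ht.2.le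
  exact hK.limsup_dirQuotient_nonneg hs (hx b ⟨hab.le, le_rfl⟩).hasDerivWithinAt hmax

/-- If `h` is locally Lipschitz, `x` is a C¹ curve with `ẋ = f(x)` for a
continuous `f`, and `t ↦ h(x(t))` is nondecreasing on `(b−η, b]`, then
`h⁰(x(b); f(x(b))) ≥ 0`. -/
theorem stmt5 (n : ℕ) (h : EuclideanSpace ℝ (Fin n) → ℝ)
    (hLip : LocallyLipschitz h)
    (f : EuclideanSpace ℝ (Fin n) → EuclideanSpace ℝ (Fin n)) (hf : Continuous f)
    (a b : ℝ) (hab : a < b)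
    (x : ℝ → EuclideanSpace ℝ (Fin n))
    (hx : ∀ t ∈ Icc a b, HasDerivAt x (f (x t)) t)
    (η : ℝ) (hη : 0 < η) (hηb : b - η ∈ Icc a b)
    (hmono : MonotoneOn (fun t => h (x t)) (Ioc (b - η) b)) :
    0 ≤ clarkeDirDeriv h (x b) (f (x b)) :=
  stmt5_general n h hLip f a b hab x hx η hη hmono
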